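/- arXiv:0901.1200 — 3 statements merged into one kernel-verified Lean document; each statement's English description precedes it below -/
import Mathlib

section
/- Let A₁₁, A₁₂, A₂₂ be Riccati data on a complex separable Hilbert space H with diag{A₁₁} − A₂₂ ≫ 0, and let (sₙ) be the successive approximations. Then the odd subsequence s₁, s₃, s₅, … is monotonically decreasing in the Loewner order (s₁ ≥ s₃ ≥ s₅ ≥ …) and has a strong operator limit: there exists a selfadjoint operator s̄ ∈ B(H) such that s_{2n+1}x → s̄x in H for every x ∈ H. -/
open MeasureTheory ContinuousLinearMap Filter
open scoped ENNReal NNReal Topology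

noncomputable section

/-- `ℓ²(H)`: the Hilbert space of square-summable sequences in `H`, indexed by `ℕ`
(index `k : ℕ` corresponds to the `(k+1)`-st entry in the paper's `1`-based indexing). -/
abbrev l2 (H : Type*) [NormedAddCommGroup H] [InnerProductSpace ℂ H] : Type _ :=
  lp (fun _ : ℕ => H) 2

variable {H : Type*} [NormedAddCommGroup H] [InnerProductSpace ℂ H]

lemma memℓp_diag (q : H →L[ℂ] H) (ξ : l2 H) : Memℓp (fun k => q (ξ k)) 2 := by
  have h2 : (0:ℝ) < (2 : ℝ≥0∞).toReal := by norm_num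
  apply memℓp_gen
  have hs : Summable (fun k => ‖q‖ ^ (2 : ℝ≥0∞).toReal * ‖ξ k‖ ^ (2 : ℝ≥0∞).toReal) :=
    ((lp.memℓp ξ).summable h2).mul_left _
  refine Summable.of_nonneg_of_le (fun k => ?_) (fun k => ?_) hs
  · positivity
  · rw [← Real.mul_rpow (norm_nonneg _) (norm_nonneg _)]
    exact Real.rpow_le_rpow (norm_nonneg _) (q.le_opNorm _) (by norm_num)

/-- `diag{q}`: the bounded block-diagonal operator on `ℓ²(H)` acting componentwise,
`(diag{q} ξ)ₖ = q (ξₖ)`. -/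
def diagOp (q : H →L[ℂ] H) : l2 H →L[ℂ] l2 H :=
  LinearMap.mkContinuous
    { toFun := fun ξ => ⟨fun k => q (ξ k), memℓp_diag q ξ⟩
      map_add' := fun ξ η => by ext k; simp [lp.coeFn_add]; rfl
      map_smul' := fun c ξ => by ext k; simp [lp.coeFn_smul] }
    ‖q‖
    (by
      intro ξ
      have h2 : (0:ℝ) < (2 : ℝ≥0∞).toReal := by norm_num
      refine lp.norm_le_of_tsum_le h2 (by positivity) ?_
      have hξ : ‖ξ‖ ^ (2 : ℝ≥0∞).toReal = ∑' k, ‖ξ k‖ ^ (2 : ℝ≥0∞).toReal :=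
        lp.norm_rpow_eq_tsum h2 ξ
      have hsum : Summable (fun k => ‖ξ k‖ ^ (2 : ℝ≥0∞).toReal) := (lp.memℓp ξ).summable h2
      calc ∑' k, ‖(fun k => q (ξ k)) k‖ ^ (2 : ℝ≥0∞).toReal
          ≤ ∑' k, ‖q‖ ^ (2 : ℝ≥0∞).toReal * ‖ξ k‖ ^ (2 : ℝ≥0∞).toReal := by
            refine Summable.tsum_le_tsum (fun k => ?_) ?_ (hsum.mul_left _)
            · rw [← Real.mul_rpow (norm_nonneg _) (norm_nonneg _)]
              exact Real.rpow_le_rpow (norm_nonneg _) (q.le_opNorm _) (by norm_num)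
            · refine Summable.of_nonneg_of_le (fun k => ?_) (fun k => ?_)
                (hsum.mul_left (‖q‖ ^ (2 : ℝ≥0∞).toReal))
              · positivity
              · rw [← Real.mul_rpow (norm_nonneg _) (norm_nonneg _)]
                exact Real.rpow_le_rpow (norm_nonneg _) (q.le_opNorm _) (by norm_num)
        _ = (‖q‖ * ‖ξ‖) ^ (2 : ℝ≥0∞).toReal := by
            rw [tsum_mul_left, ← hξ, Real.mul_rpow (norm_nonneg _) (norm_nonneg _)])

@[simp] lemma diagOp_apply (q : H →L[ℂ] H) (ξ : l2 H) (k : ℕ) :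
    (diagOp q ξ) k = q (ξ k) := rfl

/-- An operator is *strongly positive* (written `ρ ≫ 0` in the paper) if `δ • I ≤ ρ`
(Loewner order) for some `δ > 0`.  A strongly positive operator is boundedly invertible. -/
def StronglyPositive {E : Type*} [NormedAddCommGroup E] [InnerProductSpace ℂ E]
    [CompleteSpace E] (ρ : E →L[ℂ] E) : Prop :=
  ∃ δ : ℝ, 0 < δ ∧ δ • (1 : E →L[ℂ] E) ≤ ρ

variable [CompleteSpace H]

/-- The Riccati map `ℱ(s) = A₁₁ + A₁₂ (diag{s} − A₂₂)⁻¹ A₁₂*`.  Here `Ring.inverse` is the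
genuine inverse whenever `diag{s} − A₂₂` is boundedly invertible, which is guaranteed when
`diag{s} − A₂₂ ≫ 0`. -/
def riccatiMap (A11 : H →L[ℂ] H) (A12 : l2 H →L[ℂ] H) (A22 : l2 H →L[ℂ] l2 H)
    (s : H →L[ℂ] H) : H →L[ℂ] H :=
  A11 + A12 ∘L Ring.inverse (diagOp s - A22) ∘L ContinuousLinearMap.adjoint A12

/-- The successive approximations `s₀ = A₁₁`, `s_{n+1} = ℱ(sₙ)`. -/
def riccatiSeq (A11 : H →L[ℂ] H) (A12 : l2 H →L[ℂ] H) (A22 : l2 H →L[ℂ] l2 H) :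
    ℕ → (H →L[ℂ] H)
  | 0 => A11
  | n + 1 => riccatiMap A11 A12 A22 (riccatiSeq A11 A12 A22 n)

end

/-!
The Riccati map `ℱ` is antitone on `{s | A₁₁ ≤ s}`: the operator inverse is antitone on
strictly positive operators and conjugation by `A₁₂` preserves the Loewner order. Every `sₙ`
lies above `A₁₁`, so `ℱ ∘ ℱ` is monotone along the sequence; from `s₀ = A₁₁ ≤ s₂` the even
approximations increase, and applying `ℱ` once more, the odd ones decrease.

A decreasing sequence `Tₙ` of operators bounded below by `A` converges strongly: for `P ≥ 0`
one has `‖P x‖² ≤ ‖P‖ re ⟪P x, x⟫`, and for `P = Tₙ - Tₘ` (`n ≤ m`) this bounds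
`‖Tₙ x - Tₘ x‖²` by `‖T₀ - A‖` times the difference of the convergent quadratic forms
`re ⟪Tₙ x, x⟫`.
-/

open RCLike

section Operators

variable {E : Type*} [NormedAddCommGroup E] [InnerProductSpace ℂ E]

theorem ContinuousLinearMap.re_inner_apply_le_of_le {a b : E →L[ℂ] E} (hab : a ≤ b) (x : E) :
    re (inner ℂ (a x) x) ≤ re (inner ℂ (b x) x) := by
  have h := ((ContinuousLinearMap.le_def a b).mp hab).re_inner_nonneg_left x
  rw [sub_apply, inner_sub_left, map_sub] at h
  linarith

variable [CompleteSpace E]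

theorem StronglyPositive.isStrictlyPositive {ρ : E →L[ℂ] E} (hρ : StronglyPositive ρ) :
    IsStrictlyPositive ρ := by
  obtain ⟨δ, hδ, hle⟩ := hρ
  exact (IsStrictlyPositive.smul hδ isStrictlyPositive_one).of_le hle

theorem ContinuousLinearMap.norm_apply_sq_le_of_nonneg {P : E →L[ℂ] E} (hP : 0 ≤ P) (x : E) :
    ‖P x‖ ^ 2 ≤ ‖P‖ * re (inner ℂ (P x) x) := by
  set S := CFC.sqrt P
  have hSS : S * S = P := CFC.sqrt_mul_sqrt_self P hP
  have hS : IsSelfAdjoint S := .of_nonneg (CFC.sqrt_nonneg P)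
  have hPS : ∀ y, P y = S (S y) := fun y => by rw [← hSS]; rfl
  have hinner : re (inner ℂ (P x) x) = ‖S x‖ ^ 2 := by
    rw [hPS, ← adjoint_inner_right S, hS.adjoint_eq, inner_self_eq_norm_sq (𝕜 := ℂ)]
  have hnorm : ‖P‖ = ‖S‖ ^ 2 := by
    rw [← hSS, sq, ← CStarRing.norm_star_mul_self, hS.star_eq]
  calc ‖P x‖ ^ 2 ≤ (‖S‖ * ‖S x‖) ^ 2 := by
        rw [hPS]; gcongr; exact S.le_opNorm _
    _ = ‖P‖ * re (inner ℂ (P x) x) := by rw [hinner, hnorm]; ring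

theorem ContinuousLinearMap.cauchySeq_apply_of_antitone {T : ℕ → E →L[ℂ] E} {A : E →L[ℂ] E}
    (hT : Antitone T) (hA : ∀ n, A ≤ T n) (x : E) : CauchySeq fun n => T n x := by
  set g : ℕ → ℝ := fun n => re (inner ℂ (T n x) x)
  have hg : Antitone g := fun n m hnm => re_inner_apply_le_of_le (hT hnm) x
  have hg_bdd : BddBelow (Set.range g) :=
    ⟨re (inner ℂ (A x) x), by rintro _ ⟨n, rfl⟩; exact re_inner_apply_le_of_le (hA n) x⟩
  set ℓ := ⨅ n, g n
  have hgℓ : Tendsto g atTop (𝓝 ℓ) := tendsto_atTop_ciInf hg hg_bdd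
  set C := ‖T 0 - A‖
  refine cauchySeq_of_le_tendsto_0' (fun n => √(C * (g n - ℓ))) (fun n m hnm => ?_) ?_
  · have hnonneg : 0 ≤ T n - T m := sub_nonneg.mpr (hT hnm)
    have hC : ‖T n - T m‖ ≤ C :=
      CStarAlgebra.norm_le_norm_of_nonneg_of_le hnonneg (sub_le_sub (hT (Nat.zero_le n)) (hA m))
    have hform : re (inner ℂ ((T n - T m) x) x) = g n - g m := by
      simp only [g, sub_apply, inner_sub_left, map_sub]
    have hgm : ℓ ≤ g m := ciInf_le hg_bdd m
    have hgnm : 0 ≤ g n - g m := sub_nonneg.mpr (hg hnm)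
    rw [dist_eq_norm, ← sub_apply]
    refine Real.le_sqrt_of_sq_le ?_
    calc ‖(T n - T m) x‖ ^ 2 ≤ ‖T n - T m‖ * (g n - g m) :=
          hform ▸ norm_apply_sq_le_of_nonneg hnonneg x
      _ ≤ C * (g n - ℓ) := by gcongr
  · simpa using ((hgℓ.sub_const ℓ).const_mul C).sqrt

theorem ContinuousLinearMap.exists_tendsto_apply_of_antitone {T : ℕ → E →L[ℂ] E}
    {A : E →L[ℂ] E} (hT : Antitone T) (hA : ∀ n, A ≤ T n) :
    ∃ L : E →L[ℂ] E, ∀ x, Tendsto (fun n => T n x) atTop (𝓝 (L x)) := by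
  choose f hf using fun x =>
    cauchySeq_tendsto_of_complete (cauchySeq_apply_of_antitone hT hA x)
  exact ⟨continuousLinearMapOfTendsto T (tendsto_pi_nhds.mpr hf), hf⟩

theorem IsSelfAdjoint.of_tendsto_apply {T : ℕ → E →L[ℂ] E} {L : E →L[ℂ] E}
    (hT : ∀ n, IsSelfAdjoint (T n)) (hL : ∀ x, Tendsto (fun n => T n x) atTop (𝓝 (L x))) :
    IsSelfAdjoint L := by
  rw [isSelfAdjoint_iff_isSymmetric]
  intro x y
  have hsymm : ∀ n, inner ℂ (T n x) y = inner ℂ x (T n y) :=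
    fun n => isSelfAdjoint_iff_isSymmetric.mp (hT n) x y
  change inner ℂ (L x) y = inner ℂ x (L y)
  refine tendsto_nhds_unique ((hL x).inner tendsto_const_nhds) ?_
  simp_rw [hsymm]
  exact tendsto_const_nhds.inner (hL y)

theorem IsStrictlyPositive.isPositive_conj_ringInverse {F : Type*} [NormedAddCommGroup F]
    [InnerProductSpace ℂ F] [CompleteSpace F] {ρ : E →L[ℂ] E} (hρ : IsStrictlyPositive ρ)
    (S : E →L[ℂ] F) : (S ∘L Ring.inverse ρ ∘L adjoint S).IsPositive :=
  ((nonneg_iff_isPositive _).mp hρ.ringInverse.nonneg).conj_adjoint S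

theorem IsStrictlyPositive.conj_ringInverse_le_conj_ringInverse {F : Type*}
    [NormedAddCommGroup F] [InnerProductSpace ℂ F] [CompleteSpace F] {ρ σ : E →L[ℂ] E}
    (hρ : IsStrictlyPositive ρ) (hρσ : ρ ≤ σ) (S : E →L[ℂ] F) :
    S ∘L Ring.inverse σ ∘L adjoint S ≤ S ∘L Ring.inverse ρ ∘L adjoint S := by
  rw [ContinuousLinearMap.le_def, ← comp_sub, ← sub_comp]
  exact ((nonneg_iff_isPositive _).mp
    (sub_nonneg.mpr (CStarAlgebra.ringInverse_le_ringInverse hρσ hρ))).conj_adjoint S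

end Operators

section Diagonal

variable {H : Type*} [NormedAddCommGroup H] [InnerProductSpace ℂ H]

theorem diagOp_sub (p q : H →L[ℂ] H) : diagOp (p - q) = diagOp p - diagOp q := by
  ext ξ k
  rfl

variable [CompleteSpace H]

theorem isPositive_diagOp {r : H →L[ℂ] H} (hr : r.IsPositive) : (diagOp r).IsPositive := by
  rw [isPositive_def']
  constructor
  · rw [isSelfAdjoint_iff_isSymmetric]
    intro ξ η
    have hsymm := isSelfAdjoint_iff_isSymmetric.mp hr.isSelfAdjoint
    simp only [lp.inner_eq_tsum]
    exact tsum_congr fun k => hsymm (ξ k) (η k)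
  · intro ξ
    rw [reApplyInnerSelf, lp.inner_eq_tsum, ← reCLM_apply (K := ℂ),
      ContinuousLinearMap.map_tsum _ (lp.summable_inner (𝕜 := ℂ) (diagOp r ξ) ξ)]
    exact tsum_nonneg fun k => hr.re_inner_nonneg_left (ξ k)

theorem diagOp_mono : Monotone (diagOp : (H →L[ℂ] H) → l2 H →L[ℂ] l2 H) := fun p q hpq => by
  rw [ContinuousLinearMap.le_def, ← diagOp_sub]
  exact isPositive_diagOp hpq

end Diagonal

section Riccati

variable {H : Type*} [NormedAddCommGroup H] [InnerProductSpace ℂ H] [CompleteSpace H]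
  {A11 : H →L[ℂ] H} (A12 : l2 H →L[ℂ] H) {A22 : l2 H →L[ℂ] l2 H}

theorem IsStrictlyPositive.diagOp_sub_of_le (hgap : IsStrictlyPositive (diagOp A11 - A22))
    {s : H →L[ℂ] H} (hs : A11 ≤ s) : IsStrictlyPositive (diagOp s - A22) :=
  hgap.of_le (sub_le_sub_right (diagOp_mono hs) A22)

theorem le_riccatiMap {s : H →L[ℂ] H} (hs : IsStrictlyPositive (diagOp s - A22)) :
    A11 ≤ riccatiMap A11 A12 A22 s :=
  le_add_of_nonneg_right <| (nonneg_iff_isPositive _).mpr <| hs.isPositive_conj_ringInverse A12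

theorem isSelfAdjoint_riccatiMap (hA11 : IsSelfAdjoint A11) {s : H →L[ℂ] H}
    (hs : IsStrictlyPositive (diagOp s - A22)) : IsSelfAdjoint (riccatiMap A11 A12 A22 s) :=
  hA11.add (hs.isPositive_conj_ringInverse A12).isSelfAdjoint

theorem riccatiMap_le_riccatiMap {s t : H →L[ℂ] H} (hs : IsStrictlyPositive (diagOp s - A22))
    (hst : s ≤ t) : riccatiMap A11 A12 A22 t ≤ riccatiMap A11 A12 A22 s :=
  add_le_add_right (hs.conj_ringInverse_le_conj_ringInverse
    (sub_le_sub_right (diagOp_mono hst) A22) A12) A11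

variable (hgap : IsStrictlyPositive (diagOp A11 - A22))
include hgap

theorem le_riccatiSeq (n : ℕ) : A11 ≤ riccatiSeq A11 A12 A22 n := by
  cases n with
  | zero => exact le_rfl
  | succ n => exact le_riccatiMap A12 (hgap.diagOp_sub_of_le (le_riccatiSeq n))

theorem isSelfAdjoint_riccatiSeq (hA11 : IsSelfAdjoint A11) (n : ℕ) :
    IsSelfAdjoint (riccatiSeq A11 A12 A22 n) := by
  cases n with
  | zero => exact hA11
  | succ n =>
    exact isSelfAdjoint_riccatiMap A12 hA11 (hgap.diagOp_sub_of_le (le_riccatiSeq A12 hgap n))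

theorem riccatiSeq_succ_le_succ_of_le {m n : ℕ}
    (h : riccatiSeq A11 A12 A22 m ≤ riccatiSeq A11 A12 A22 n) :
    riccatiSeq A11 A12 A22 (n + 1) ≤ riccatiSeq A11 A12 A22 (m + 1) :=
  riccatiMap_le_riccatiMap A12 (hgap.diagOp_sub_of_le (le_riccatiSeq A12 hgap m)) h

theorem riccatiSeq_two_mul_le (n : ℕ) :
    riccatiSeq A11 A12 A22 (2 * n) ≤ riccatiSeq A11 A12 A22 (2 * n + 2) := by
  induction n with
  | zero => exact le_riccatiSeq A12 hgap 2
  | succ n ih =>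
    exact riccatiSeq_succ_le_succ_of_le A12 hgap (riccatiSeq_succ_le_succ_of_le A12 hgap ih)

theorem antitone_riccatiSeq_odd : Antitone fun n => riccatiSeq A11 A12 A22 (2 * n + 1) :=
  antitone_nat_of_succ_le fun n =>
    riccatiSeq_succ_le_succ_of_le A12 hgap (riccatiSeq_two_mul_le A12 hgap n)

end Riccati

theorem riccati_odd_iterates_antitone_and_strongly_convergent_general
    {H : Type*} [NormedAddCommGroup H] [InnerProductSpace ℂ H] [CompleteSpace H]
    (A11 : H →L[ℂ] H) (A12 : l2 H →L[ℂ] H) (A22 : l2 H →L[ℂ] l2 H)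
    (hA11sa : IsSelfAdjoint A11)
    (hgap : StronglyPositive (diagOp A11 - A22)) :
    Antitone (fun n => riccatiSeq A11 A12 A22 (2 * n + 1)) ∧
      ∃ sbar : H →L[ℂ] H, IsSelfAdjoint sbar ∧
        ∀ x : H, Filter.Tendsto (fun n => riccatiSeq A11 A12 A22 (2 * n + 1) x)
          Filter.atTop (𝓝 (sbar x)) := by
  have hgap' := hgap.isStrictlyPositive
  have hanti := antitone_riccatiSeq_odd A12 hgap'
  obtain ⟨sbar, hsbar⟩ :=
    ContinuousLinearMap.exists_tendsto_apply_of_antitone hanti fun n => le_riccatiSeq A12 hgap' _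
  exact ⟨hanti, sbar,
    .of_tendsto_apply (fun n => isSelfAdjoint_riccatiSeq A12 hgap' hA11sa _) hsbar, hsbar⟩

/-- **Lemma 2.2 (part 2).**  The odd successive approximations `s₁, s₃, s₅, …` decrease
monotonically in the Loewner order and converge strongly to a selfadjoint operator. -/
theorem riccati_odd_iterates_antitone_and_strongly_convergent
    {H : Type*} [NormedAddCommGroup H] [InnerProductSpace ℂ H] [CompleteSpace H]
    [TopologicalSpace.SeparableSpace H]
    (A11 : H →L[ℂ] H) (A12 : l2 H →L[ℂ] H) (A22 : l2 H →L[ℂ] l2 H)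
    (hA11sa : IsSelfAdjoint A11) (hA22sa : IsSelfAdjoint A22)
    (hgap : StronglyPositive (diagOp A11 - A22)) :
    Antitone (fun n => riccatiSeq A11 A12 A22 (2 * n + 1)) ∧
      ∃ sbar : H →L[ℂ] H, IsSelfAdjoint sbar ∧
        ∀ x : H, Filter.Tendsto (fun n => riccatiSeq A11 A12 A22 (2 * n + 1) x)
          Filter.atTop (𝓝 (sbar x)) :=
  riccati_odd_iterates_antitone_and_strongly_convergent_general A11 A12 A22 hA11sa hgap
end

section
/- Let H be a complex separable Hilbert space, let y ∈ B(H) be a positive operator, let B : H → ℓ²(H) be a bounded operator, and suppose there is c < 1 with B*B ≤ c·I. If y = B* diag{y} B, then y = 0. -/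
open MeasureTheory ContinuousLinearMap Filter
open scoped ENNReal NNReal Topology

/-!
The relation `y = B* diag{y} B` is a strict contraction for the operator norm:
`‖diag{y}‖ ≤ ‖y‖`, and the C*-identity `‖B‖² = ‖B*B‖` together with
`0 ≤ B*B ≤ c·I` gives `‖B‖² ≤ max c 0 < 1`, so `‖y‖ ≤ max c 0 · ‖y‖` forces `‖y‖ = 0`.
-/

lemma norm_diagOp_le {H : Type*} [NormedAddCommGroup H] [InnerProductSpace ℂ H]
    (q : H →L[ℂ] H) : ‖diagOp q‖ ≤ ‖q‖ :=
  LinearMap.mkContinuous_norm_le _ (norm_nonneg q) _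

section

variable {E F : Type*} [NormedAddCommGroup E] [InnerProductSpace ℂ E] [CompleteSpace E]
  [NormedAddCommGroup F] [InnerProductSpace ℂ F] [CompleteSpace F]

lemma norm_mul_self_le_of_adjoint_comp_self_le (B : E →L[ℂ] F) {c : ℝ} (hc : 0 ≤ c)
    (hB : adjoint B ∘L B ≤ c • (1 : E →L[ℂ] E)) : ‖B‖ * ‖B‖ ≤ c := by
  have hpos : 0 ≤ adjoint B ∘L B := (nonneg_iff_isPositive _).mpr B.isPositive_adjoint_comp_self
  rwa [← norm_adjoint_comp_self, CStarAlgebra.norm_le_iff_le_algebraMap _ hc hpos,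
    Algebra.algebraMap_eq_smul_one]

lemma norm_adjoint_comp_comp_self_le (B : E →L[ℂ] F) (T : F →L[ℂ] F) :
    ‖adjoint B ∘L T ∘L B‖ ≤ ‖B‖ * ‖B‖ * ‖T‖ :=
  calc ‖adjoint B ∘L T ∘L B‖ ≤ ‖adjoint B‖ * (‖T‖ * ‖B‖) :=
        (opNorm_comp_le _ _).trans (by gcongr; exact opNorm_comp_le _ _)
    _ = ‖B‖ * ‖B‖ * ‖T‖ := by rw [LinearIsometryEquiv.norm_map]; ring

end

theorem eq_zero_of_eq_adjoint_diag_of_contraction_general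
    {H : Type*} [NormedAddCommGroup H] [InnerProductSpace ℂ H] [CompleteSpace H]
    (y : H →L[ℂ] H)
    (B : H →L[ℂ] l2 H) (c : ℝ) (hc : c < 1)
    (hB : ContinuousLinearMap.adjoint B ∘L B ≤ c • (1 : H →L[ℂ] H))
    (hfix : y = ContinuousLinearMap.adjoint B ∘L diagOp y ∘L B) :
    y = 0 := by
  set c' := max c 0
  have hnormB : ‖B‖ * ‖B‖ ≤ c' :=
    norm_mul_self_le_of_adjoint_comp_self_le B (le_max_right c 0)
      (hB.trans (smul_le_smul_of_nonneg_right (le_max_left c 0) zero_le_one))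
  have hcontract : ‖y‖ ≤ c' * ‖y‖ :=
    calc ‖y‖ = ‖adjoint B ∘L diagOp y ∘L B‖ := congrArg norm hfix
      _ ≤ ‖B‖ * ‖B‖ * ‖diagOp y‖ := norm_adjoint_comp_comp_self_le B (diagOp y)
      _ ≤ c' * ‖y‖ := by gcongr; exact norm_diagOp_le y
  have hc' : c' < 1 := max_lt hc one_pos
  exact norm_eq_zero.mp (by nlinarith [norm_nonneg y])

/-- **The key contraction argument in Theorem 2.4.**  If `y ≥ 0`, `B*B ≤ c·I` with `c < 1`,
and `y = B* diag{y} B`, then `y = 0`. -/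
theorem eq_zero_of_eq_adjoint_diag_of_contraction
    {H : Type*} [NormedAddCommGroup H] [InnerProductSpace ℂ H] [CompleteSpace H]
    [TopologicalSpace.SeparableSpace H]
    (y : H →L[ℂ] H) (hy : 0 ≤ y)
    (B : H →L[ℂ] l2 H) (c : ℝ) (hc : c < 1)
    (hB : ContinuousLinearMap.adjoint B ∘L B ≤ c • (1 : H →L[ℂ] H))
    (hfix : y = ContinuousLinearMap.adjoint B ∘L diagOp y ∘L B) :
    y = 0 :=
  eq_zero_of_eq_adjoint_diag_of_contraction_general y B c hc hB hfix
end

section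
/- Let K₁ and K₂ be complex Hilbert spaces, let A₁₁ ∈ B(K₁) and A₂₂ ∈ B(K₂) be selfadjoint, let A₁₂ ∈ B(K₂,K₁), let P ∈ B(K₁) and S ∈ B(K₂) be selfadjoint, and assume S − A₂₂ ≫ 0 (hence boundedly invertible). Let M be the bounded operator on the Hilbert space direct sum K₁ ⊕ K₂ given by M(x,y) = (A₁₁x + A₁₂y, A₁₂*x + A₂₂y), and let N(x,y) = (Px, Sy). Then M ≤ N in the Loewner order if and only if A₁₁ + A₁₂(S − A₂₂)⁻¹A₁₂* ≤ P. -/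
open MeasureTheory ContinuousLinearMap Filter
open scoped ENNReal NNReal Topology

/-!
Write `D = S - A₂₂` and `w = D⁻¹ A₁₂* x`. Completing the square in the second variable gives
`⟪(N - M)(x, y), (x, y)⟫ = ⟪(P - A₁₁ - A₁₂ D⁻¹ A₁₂*) x, x⟫ + ⟪D (y - w), y - w⟫`.
As `D ≥ 0`, the left side is nonnegative for all `(x, y)` iff the first term on the right is
nonnegative for all `x`: one direction is `y = w`, the other is `⟪D u, u⟫ ≥ 0`.
-/

open scoped InnerProductSpace ComplexOrder

namespace ContinuousLinearMap

theorem le_iff_forall_inner_sub_nonneg {E : Type*} [NormedAddCommGroup E] [InnerProductSpace ℂ E]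
    (T S : E →L[ℂ] E) : T ≤ S ↔ ∀ x, 0 ≤ ⟪(S - T) x, x⟫_ℂ := by
  simp only [le_def, isPositive_iff_complex, Complex.nonneg_iff]
  refine forall_congr' fun x => ?_
  generalize ⟪(S - T) x, x⟫_ℂ = z
  rw [and_comm, Complex.ext_iff]
  simp [eq_comm]

section Schur

variable {𝕜 E F : Type*} [RCLike 𝕜] [NormedAddCommGroup E] [InnerProductSpace 𝕜 E]
  [CompleteSpace E] [NormedAddCommGroup F] [InnerProductSpace 𝕜 F] [CompleteSpace F]

theorem inner_block_eq_inner_schur_add {D : F →L[𝕜] F} (hD : IsSelfAdjoint D) (hDu : IsUnit D)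
    (Q : E →L[𝕜] E) (B : F →L[𝕜] E) (x : E) (y : F) :
    ⟪Q x - B y, x⟫_𝕜 + ⟪D y - adjoint B x, y⟫_𝕜 =
      ⟪(Q - B ∘L Ring.inverse D ∘L adjoint B) x, x⟫_𝕜 +
        ⟪D (y - Ring.inverse D (adjoint B x)), y - Ring.inverse D (adjoint B x)⟫_𝕜 := by
  set w := Ring.inverse D (adjoint B x)
  have hDw : D w = adjoint B x := by
    show (D * Ring.inverse D) _ = _
    rw [Ring.mul_inverse_cancel D hDu]
    rfl
  have h1 : ⟪D y, w⟫_𝕜 = ⟪B y, x⟫_𝕜 := by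
    rw [← hD.adjoint_eq, adjoint_inner_left, hDw, adjoint_inner_right]
  have h2 : ⟪(B ∘L Ring.inverse D ∘L adjoint B) x, x⟫_𝕜 = ⟪D w, w⟫_𝕜 := by
    rw [hDw, comp_apply, comp_apply, ← adjoint_inner_right, ← hD.ringInverse.adjoint_eq,
      adjoint_inner_left]
  simp only [sub_apply, inner_sub_left, inner_sub_right, map_sub, h1, h2, hDw]
  ring

theorem forall_inner_block_nonneg_iff {D : F →L[𝕜] F} (hD : D.IsPositive) (hDu : IsUnit D)
    (Q : E →L[𝕜] E) (B : F →L[𝕜] E) :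
    (∀ x y, 0 ≤ ⟪Q x - B y, x⟫_𝕜 + ⟪D y - adjoint B x, y⟫_𝕜) ↔
      ∀ x, 0 ≤ ⟪(Q - B ∘L Ring.inverse D ∘L adjoint B) x, x⟫_𝕜 := by
  simp only [inner_block_eq_inner_schur_add hD.isSelfAdjoint hDu]
  refine ⟨fun h x => ?_, fun h x y => add_nonneg (h x) (hD.inner_nonneg_left _)⟩
  simpa using h x (Ring.inverse D (adjoint B x))

end Schur

end ContinuousLinearMap

theorem StronglyPositive.isStrictlyPositive_s12 {E : Type*} [NormedAddCommGroup E]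
    [InnerProductSpace ℂ E] [CompleteSpace E] {ρ : E →L[ℂ] E} (h : StronglyPositive ρ) :
    IsStrictlyPositive ρ :=
  let ⟨_, hδ, hle⟩ := h
  (isStrictlyPositive_one.smul hδ).of_le hle

theorem block_le_iff_schur_complement_le_general
    {K₁ K₂ : Type*} [NormedAddCommGroup K₁] [InnerProductSpace ℂ K₁] [CompleteSpace K₁]
    [NormedAddCommGroup K₂] [InnerProductSpace ℂ K₂] [CompleteSpace K₂]
    (A11 : K₁ →L[ℂ] K₁) (A12 : K₂ →L[ℂ] K₁) (A22 : K₂ →L[ℂ] K₂)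
    (P : K₁ →L[ℂ] K₁) (S : K₂ →L[ℂ] K₂)
    (hgap : StronglyPositive (S - A22)) :
    letI e : WithLp 2 (K₁ × K₂) ≃L[ℂ] K₁ × K₂ := WithLp.prodContinuousLinearEquiv 2 ℂ K₁ K₂
    letI fst := ContinuousLinearMap.fst ℂ K₁ K₂
    letI snd := ContinuousLinearMap.snd ℂ K₁ K₂
    letI M : WithLp 2 (K₁ × K₂) →L[ℂ] WithLp 2 (K₁ × K₂) :=
      (e.symm : K₁ × K₂ →L[ℂ] WithLp 2 (K₁ × K₂)) ∘L
        ((A11 ∘L fst + A12 ∘L snd).prod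
          ((ContinuousLinearMap.adjoint A12) ∘L fst + A22 ∘L snd)) ∘L
        (e : WithLp 2 (K₁ × K₂) →L[ℂ] K₁ × K₂)
    letI N : WithLp 2 (K₁ × K₂) →L[ℂ] WithLp 2 (K₁ × K₂) :=
      (e.symm : K₁ × K₂ →L[ℂ] WithLp 2 (K₁ × K₂)) ∘L
        ((P ∘L fst).prod (S ∘L snd)) ∘L
        (e : WithLp 2 (K₁ × K₂) →L[ℂ] K₁ × K₂)
    (M ≤ N ↔
      A11 + A12 ∘L Ring.inverse (S - A22) ∘L ContinuousLinearMap.adjoint A12 ≤ P) := by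
  have hD := hgap.isStrictlyPositive_s12
  rw [le_iff_forall_inner_sub_nonneg, le_iff_forall_inner_sub_nonneg, sub_add_eq_sub_sub,
    ← forall_inner_block_nonneg_iff ((nonneg_iff_isPositive _).mp hD.nonneg) hD.isUnit,
    ← (WithLp.equiv 2 (K₁ × K₂)).symm.forall_congr_right, Prod.forall]
  refine forall₂_congr fun x y => Iff.of_eq (congrArg _ ?_)
  simp only [WithLp.equiv_symm_apply, sub_apply, comp_apply, ContinuousLinearEquiv.coe_coe,
    WithLp.prodContinuousLinearEquiv_apply, prod_apply, coe_fst', coe_snd',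
    WithLp.prodContinuousLinearEquiv_symm_apply, add_apply, WithLp.prod_inner_apply,
    inner_add_left, inner_sub_left]
  ring

/-- **Schur-complement criterion (the equivalence (1.8) ⇔ (2.7)).**  For the selfadjoint block
operator `M = [[A₁₁, A₁₂], [A₁₂*, A₂₂]]` and the block-diagonal `N = diag{P, S}` on `K₁ ⊕ K₂`
with `S − A₂₂ ≫ 0`, one has `M ≤ N` iff `A₁₁ + A₁₂(S − A₂₂)⁻¹A₁₂* ≤ P`. -/
theorem block_le_iff_schur_complement_le
    {K₁ K₂ : Type*} [NormedAddCommGroup K₁] [InnerProductSpace ℂ K₁] [CompleteSpace K₁]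
    [NormedAddCommGroup K₂] [InnerProductSpace ℂ K₂] [CompleteSpace K₂]
    (A11 : K₁ →L[ℂ] K₁) (A12 : K₂ →L[ℂ] K₁) (A22 : K₂ →L[ℂ] K₂)
    (P : K₁ →L[ℂ] K₁) (S : K₂ →L[ℂ] K₂)
    (hA11 : IsSelfAdjoint A11) (hA22 : IsSelfAdjoint A22)
    (hP : IsSelfAdjoint P) (hS : IsSelfAdjoint S)
    (hgap : StronglyPositive (S - A22)) :
    letI e : WithLp 2 (K₁ × K₂) ≃L[ℂ] K₁ × K₂ := WithLp.prodContinuousLinearEquiv 2 ℂ K₁ K₂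
    letI fst := ContinuousLinearMap.fst ℂ K₁ K₂
    letI snd := ContinuousLinearMap.snd ℂ K₁ K₂
    letI M : WithLp 2 (K₁ × K₂) →L[ℂ] WithLp 2 (K₁ × K₂) :=
      (e.symm : K₁ × K₂ →L[ℂ] WithLp 2 (K₁ × K₂)) ∘L
        ((A11 ∘L fst + A12 ∘L snd).prod
          ((ContinuousLinearMap.adjoint A12) ∘L fst + A22 ∘L snd)) ∘L
        (e : WithLp 2 (K₁ × K₂) →L[ℂ] K₁ × K₂)
    letI N : WithLp 2 (K₁ × K₂) →L[ℂ] WithLp 2 (K₁ × K₂) :=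
      (e.symm : K₁ × K₂ →L[ℂ] WithLp 2 (K₁ × K₂)) ∘L
        ((P ∘L fst).prod (S ∘L snd)) ∘L
        (e : WithLp 2 (K₁ × K₂) →L[ℂ] K₁ × K₂)
    (M ≤ N ↔
      A11 + A12 ∘L Ring.inverse (S - A22) ∘L ContinuousLinearMap.adjoint A12 ≤ P) :=
  block_le_iff_schur_complement_le_general A11 A12 A22 P S hgap
end
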